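/- arXiv:2001.11607 — 8 statements merged into one kernel-verified Lean document; each statement's English description precedes it below -/
import Mathlib

section
/- Consider the process that maintains a priority queue of tuples over layer-product indices (u,v) ∈ {1..p}×{1..q}, starting with ⌊(1,1)⌋, where popping ⌊(u,v)⌋ inserts ⌊(u+1,v)⌋, ⌊(u,v+1)⌋, and ⌈(u,v)⌉ (avoiding duplicates), and tuples are popped in lexicographic order of (value, index, isMax). Then whenever ⌊(u,v)⌋ is popped, ⌊(u−1,v)⌋ (if u > 1) and ⌊(u,v−1)⌋ (if v > 1) have already been popped. -/
/-- A tuple in the priority queue: (value, layer-product index (u,v), isMax flag). -/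
abbrev Tup := ℝ × (ℕ × ℕ) × Bool

/-- Lexicographic order on index pairs. -/
def idxLt (a b : ℕ × ℕ) : Prop := a.1 < b.1 ∨ (a.1 = b.1 ∧ a.2 < b.2)

/-- Lexicographic order on tuples (value, index, flag), with false < true. -/
def tupLt (a b : Tup) : Prop :=
  a.1 < b.1 ∨ (a.1 = b.1 ∧ (idxLt a.2.1 b.2.1 ∨ (a.2.1 = b.2.1 ∧ a.2.2 < b.2.2)))

/-- ⌊(u,v)⌋ : the minimum tuple of layer product (u,v). -/
def floorT (lo : ℕ × ℕ → ℝ) (uv : ℕ × ℕ) : Tup := (lo uv, uv, false)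

/-- ⌈(u,v)⌉ : the maximum tuple of layer product (u,v). -/
def ceilT (hi : ℕ × ℕ → ℝ) (uv : ℕ × ℕ) : Tup := (hi uv, uv, true)

/-- Tuples inserted when a tuple is popped: popping ⌊(u,v)⌋ inserts ⌈(u,v)⌉,
⌊(u+1,v)⌋ and ⌊(u,v+1)⌋ (when in range 1..p × 1..q); popping ⌈(u,v)⌉ inserts
nothing. -/
noncomputable def succs (p q : ℕ) (lo hi : ℕ × ℕ → ℝ) (t : Tup) : Finset Tup :=
  if t.2.2 = true then ∅
  else
    {ceilT hi t.2.1}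
      ∪ (if t.2.1.1 + 1 ≤ p then {floorT lo (t.2.1.1 + 1, t.2.1.2)} else ∅)
      ∪ (if t.2.1.2 + 1 ≤ q then {floorT lo (t.2.1.1, t.2.1.2 + 1)} else ∅)

/-- A run of the layer-product popping process: `H t` is the heap content before
the `t`-th pop, `pop t` is the tuple popped at time `t`, and `N` is the number of
pops performed.  The heap starts with ⌊(1,1)⌋, each pop removes a minimum tuple
and inserts its successors, avoiding duplicates of already-popped tuples. -/
structure Run (p q : ℕ) (lo hi : ℕ × ℕ → ℝ) where
  N : ℕ
  H : ℕ → Finset Tup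
  pop : ℕ → Tup
  init : H 0 = {floorT lo (1, 1)}
  mem : ∀ t < N, pop t ∈ H t
  isMin : ∀ t < N, ∀ x ∈ H t, ¬ tupLt x (pop t)
  step : ∀ t < N, H (t + 1) =
    ((H t).erase (pop t)) ∪
      ((succs p q lo hi (pop t)) \ ((Finset.range (t + 1)).image pop))

/-! The layer minima `lo` are monotone in both coordinates, so a floor tuple with a smaller
index is smaller than the one being popped; once inserted, it must therefore have been popped
before. Now argue by strong induction on time: ⌊(u+1,v)⌋ was inserted when its parent was
popped, and the parent is either ⌊(u,v)⌋ or ⌊(u+1,v-1)⌋. In the second case ⌊(u,v-1)⌋ was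
popped even earlier, and popping it inserted ⌊(u,v)⌋, which is then popped before ⌊(u+1,v)⌋. -/

lemma Finset.monotone_min'_of_layered {α : Type*} [LinearOrder α] {X : ℕ → Finset α}
    (hne : ∀ u, (X u).Nonempty) (hord : ∀ u v, u < v → ∀ a ∈ X u, ∀ b ∈ X v, a ≤ b) :
    Monotone fun u => (X u).min' (hne u) :=
  monotone_nat_of_le_succ fun u =>
    hord u (u + 1) u.lt_succ_self _ (Finset.min'_mem _ _) _ (Finset.min'_mem _ _)

lemma floorT_injective (lo : ℕ × ℕ → ℝ) : Function.Injective (floorT lo) :=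
  fun _ _ h => congrArg (fun x : Tup => x.2.1) h

lemma tupLt_floorT_of_lt {lo : ℕ × ℕ → ℝ} (hlo : Monotone lo) {a b : ℕ × ℕ} (h : a < b) :
    tupLt (floorT lo a) (floorT lo b) := by
  have hidx : idxLt a b := by
    rw [Prod.lt_iff] at h
    unfold idxLt
    omega
  rcases (hlo h.le).lt_or_eq with hlt | heq
  · exact Or.inl hlt
  · exact Or.inr ⟨heq, Or.inl hidx⟩

section Succs

variable {p q : ℕ} {lo hi : ℕ × ℕ → ℝ}

lemma succs_ceilT (c : ℕ × ℕ) : succs p q lo hi (ceilT hi c) = ∅ := by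
  simp [succs, ceilT]

lemma exists_eq_floorT_or_ceilT_of_mem_succs {x y : Tup} (hx : x ∈ succs p q lo hi y) :
    ∃ c, x = floorT lo c ∨ x = ceilT hi c := by
  unfold succs at hx
  split_ifs at hx <;> simp only [Finset.mem_union, Finset.mem_singleton,
    Finset.notMem_empty, or_false] at hx <;> aesop

lemma floorT_mem_succs_floorT_iff {b c : ℕ × ℕ} :
    floorT lo b ∈ succs p q lo hi (floorT lo c) ↔
      (c.1 + 1 ≤ p ∧ b = (c.1 + 1, c.2)) ∨ (c.2 + 1 ≤ q ∧ b = (c.1, c.2 + 1)) := by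
  have hsuccs : succs p q lo hi (floorT lo c) = {ceilT hi c}
      ∪ (if c.1 + 1 ≤ p then {floorT lo (c.1 + 1, c.2)} else ∅)
      ∪ (if c.2 + 1 ≤ q then {floorT lo (c.1, c.2 + 1)} else ∅) := rfl
  have hne : ∀ a, floorT lo b ≠ ceilT hi a := by simp [floorT, ceilT]
  rw [hsuccs]
  split_ifs <;> simp_all [(floorT_injective lo).eq_iff]

end Succs

namespace Run

variable {p q : ℕ} {lo hi : ℕ × ℕ → ℝ} (r : Run p q lo hi)

lemma eq_floorT_one_one_or_mem_succs_of_mem_H {t : ℕ} (ht : t ≤ r.N) {x : Tup}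
    (hx : x ∈ r.H t) : x = floorT lo (1, 1) ∨ ∃ s < t, x ∈ succs p q lo hi (r.pop s) := by
  induction t with
  | zero => simpa [r.init] using hx
  | succ t ih =>
    rw [r.step t ht] at hx
    rcases Finset.mem_union.1 hx with hx | hx
    · rcases ih (by omega) (Finset.mem_of_mem_erase hx) with h | ⟨s, hst, hs⟩
      · exact Or.inl h
      · exact Or.inr ⟨s, by omega, hs⟩
    · exact Or.inr ⟨t, t.lt_succ_self, (Finset.mem_sdiff.1 hx).1⟩

lemma exists_pop_eq_floorT_or_ceilT {s : ℕ} (hs : s < r.N) :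
    ∃ c, r.pop s = floorT lo c ∨ r.pop s = ceilT hi c := by
  rcases r.eq_floorT_one_one_or_mem_succs_of_mem_H hs.le (r.mem s hs) with h | ⟨_, -, h⟩
  · exact ⟨_, Or.inl h⟩
  · exact exists_eq_floorT_or_ceilT_of_mem_succs h

lemma exists_parent_of_floorT_mem_H {t : ℕ} (ht : t ≤ r.N) {b : ℕ × ℕ}
    (hb : floorT lo b ∈ r.H t) (hb₁ : b ≠ (1, 1)) :
    ∃ s < t, ∃ c, r.pop s = floorT lo c ∧ floorT lo b ∈ succs p q lo hi (floorT lo c) := by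
  rcases r.eq_floorT_one_one_or_mem_succs_of_mem_H ht hb with h | ⟨s, hst, hs⟩
  · exact absurd (floorT_injective lo h) hb₁
  obtain ⟨c, hc | hc⟩ := r.exists_pop_eq_floorT_or_ceilT (s := s) (by omega)
  · exact ⟨s, hst, c, hc, hc ▸ hs⟩
  · simp [hc, succs_ceilT] at hs

lemma popped_or_mem_H_of_mem_succs {s t : ℕ} (hst : s < t) (ht : t ≤ r.N) {x : Tup}
    (hx : x ∈ succs p q lo hi (r.pop s)) : (∃ s' < t, r.pop s' = x) ∨ x ∈ r.H t := by
  induction t, hst using Nat.le_induction with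
  | base =>
    by_cases hpopped : x ∈ (Finset.range (s + 1)).image r.pop
    · obtain ⟨s', hs', rfl⟩ := Finset.mem_image.1 hpopped
      exact Or.inl ⟨s', Finset.mem_range.1 hs', rfl⟩
    · rw [r.step s ht]
      exact Or.inr (Finset.mem_union_right _ (Finset.mem_sdiff.2 ⟨hx, hpopped⟩))
  | succ t _ ih =>
    rcases ih (by omega) with ⟨s', hs', h⟩ | h
    · exact Or.inl ⟨s', by omega, h⟩
    by_cases hxt : x = r.pop t
    · exact Or.inl ⟨t, t.lt_succ_self, hxt.symm⟩
    · rw [r.step t ht]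
      exact Or.inr (Finset.mem_union_left _ (Finset.mem_erase.2 ⟨hxt, h⟩))

lemma exists_pop_eq_of_mem_succs {s t : ℕ} (hst : s < t) (ht : t < r.N) {x : Tup}
    (hx : x ∈ succs p q lo hi (r.pop s)) (hlt : tupLt x (r.pop t)) : ∃ s' < t, r.pop s' = x :=
  (r.popped_or_mem_H_of_mem_succs hst ht.le hx).resolve_right fun h => r.isMin t ht x h hlt

theorem pred_fst_popped_before (hlo : Monotone lo) {t u v : ℕ} (ht : t < r.N)
    (hpop : r.pop t = floorT lo (u + 1, v)) (hu : 0 < u) :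
    ∃ s < t, r.pop s = floorT lo (u, v) := by
  induction t using Nat.strong_induction_on generalizing v with
  | _ t ih =>
  obtain ⟨s, hst, ⟨c₁, c₂⟩, hc, hmem⟩ := r.exists_parent_of_floorT_mem_H ht.le
    (hpop ▸ r.mem t ht) (by simp; omega)
  rcases floorT_mem_succs_floorT_iff.1 hmem with ⟨-, hb⟩ | ⟨hq, hb⟩
  · obtain ⟨rfl, rfl⟩ : c₁ = u ∧ c₂ = v := by simp only [Prod.mk.injEq] at hb; omega
    exact ⟨s, hst, hc⟩
  · obtain ⟨rfl, rfl⟩ : c₁ = u + 1 ∧ v = c₂ + 1 := by simp only [Prod.mk.injEq] at hb; omega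
    obtain ⟨s', hs's, hs'⟩ := ih s hst (hst.trans ht) hc
    refine r.exists_pop_eq_of_mem_succs (hs's.trans hst) ht ?_ ?_
    · rw [hs', floorT_mem_succs_floorT_iff]
      exact Or.inr ⟨hq, rfl⟩
    · rw [hpop]
      exact tupLt_floorT_of_lt hlo (Prod.mk_lt_mk_of_lt_of_le u.lt_succ_self le_rfl)

theorem pred_snd_popped_before (hlo : Monotone lo) {t u v : ℕ} (ht : t < r.N)
    (hpop : r.pop t = floorT lo (u, v + 1)) (hv : 0 < v) :
    ∃ s < t, r.pop s = floorT lo (u, v) := by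
  induction t using Nat.strong_induction_on generalizing u with
  | _ t ih =>
  obtain ⟨s, hst, ⟨c₁, c₂⟩, hc, hmem⟩ := r.exists_parent_of_floorT_mem_H ht.le
    (hpop ▸ r.mem t ht) (by simp; omega)
  rcases floorT_mem_succs_floorT_iff.1 hmem with ⟨hp, hb⟩ | ⟨-, hb⟩
  · obtain ⟨rfl, rfl⟩ : u = c₁ + 1 ∧ c₂ = v + 1 := by simp only [Prod.mk.injEq] at hb; omega
    obtain ⟨s', hs's, hs'⟩ := ih s hst (hst.trans ht) hc
    refine r.exists_pop_eq_of_mem_succs (hs's.trans hst) ht ?_ ?_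
    · rw [hs', floorT_mem_succs_floorT_iff]
      exact Or.inl ⟨hp, rfl⟩
    · rw [hpop]
      exact tupLt_floorT_of_lt hlo (Prod.mk_lt_mk_of_le_of_lt le_rfl v.lt_succ_self)
  · obtain ⟨rfl, rfl⟩ : c₁ = u ∧ c₂ = v := by simp only [Prod.mk.injEq] at hb; omega
    exact ⟨s, hst, hc⟩

end Run

theorem floor_popped_implies_predecessors_popped_general (p q : ℕ)
    (X Y : ℕ → Finset ℝ)
    (hXne : ∀ u, (X u).Nonempty) (hYne : ∀ v, (Y v).Nonempty)
    (hXord : ∀ u v, u < v → ∀ a ∈ X u, ∀ b ∈ X v, a ≤ b)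
    (hYord : ∀ u v, u < v → ∀ a ∈ Y u, ∀ b ∈ Y v, a ≤ b)
    (lo hi : ℕ × ℕ → ℝ)
    (hlo : ∀ uv : ℕ × ℕ, lo uv = (X uv.1).min' (hXne uv.1) + (Y uv.2).min' (hYne uv.2))
    (r : Run p q lo hi) (t : ℕ) (ht : t < r.N) (u v : ℕ)
    (hpop : r.pop t = floorT lo (u, v)) :
    (1 < u → ∃ t' < t, r.pop t' = floorT lo (u - 1, v)) ∧
    (1 < v → ∃ t' < t, r.pop t' = floorT lo (u, v - 1)) := by
  have hmono : Monotone lo := by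
    rw [show lo = _ from funext hlo]
    exact ((Finset.monotone_min'_of_layered hXne hXord).comp monotone_fst).add
      ((Finset.monotone_min'_of_layered hYne hYord).comp monotone_snd)
  refine ⟨fun hu => ?_, fun hv => ?_⟩
  · obtain ⟨u, rfl⟩ : ∃ u', u = u' + 1 := ⟨u - 1, by omega⟩
    simpa using r.pred_fst_popped_before hmono ht hpop (by omega)
  · obtain ⟨v, rfl⟩ : ∃ v', v = v' + 1 := ⟨v - 1, by omega⟩
    simpa using r.pred_snd_popped_before hmono ht hpop (by omega)

/-- In the layer-product popping process, whenever ⌊(u,v)⌋ is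
popped, ⌊(u−1,v)⌋ (if u > 1) and ⌊(u,v−1)⌋ (if v > 1) were popped earlier. -/
theorem floor_popped_implies_predecessors_popped (p q : ℕ) (hp : 1 ≤ p) (hq : 1 ≤ q)
    (X Y : ℕ → Finset ℝ)
    (hXne : ∀ u, (X u).Nonempty) (hYne : ∀ v, (Y v).Nonempty)
    (hXord : ∀ u v, u < v → ∀ a ∈ X u, ∀ b ∈ X v, a ≤ b)
    (hYord : ∀ u v, u < v → ∀ a ∈ Y u, ∀ b ∈ Y v, a ≤ b)
    (lo hi : ℕ × ℕ → ℝ)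
    (hlo : ∀ uv : ℕ × ℕ, lo uv = (X uv.1).min' (hXne uv.1) + (Y uv.2).min' (hYne uv.2))
    (hhi : ∀ uv : ℕ × ℕ, hi uv = (X uv.1).max' (hXne uv.1) + (Y uv.2).max' (hYne uv.2))
    (r : Run p q lo hi) (t : ℕ) (ht : t < r.N) (u v : ℕ)
    (hpop : r.pop t = floorT lo (u, v)) :
    (1 < u → ∃ t' < t, r.pop t' = floorT lo (u - 1, v)) ∧
    (1 < v → ∃ t' < t, r.pop t' = floorT lo (u, v - 1)) :=
  floor_popped_implies_predecessors_popped_general p q X Y hXne hYne hXord hYord lo hi hlo r t ht u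
    v hpop
end

section
/- In the layer-product popping process, whenever ⌈(u,v)⌉ is popped, ⌈(u−1,v)⌉ (if u > 1) and ⌈(u,v−1)⌉ (if v > 1) have already been popped. -/
lemma mem_succs_iff (p q : ℕ) (lo hi : ℕ × ℕ → ℝ) (a b : ℕ) (y : Tup) :
    y ∈ succs p q lo hi (floorT lo (a, b)) ↔
      y = ceilT hi (a, b) ∨ (a + 1 ≤ p ∧ y = floorT lo (a + 1, b)) ∨
        (b + 1 ≤ q ∧ y = floorT lo (a, b + 1)) := by
  by_cases h1 : a + 1 ≤ p <;> by_cases h2 : b + 1 ≤ q <;>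
    simp [succs, floorT, h1, h2, Finset.mem_union, or_assoc]

lemma succs_shape (p q : ℕ) (lo hi : ℕ × ℕ → ℝ) (x y : Tup)
    (hy : y ∈ succs p q lo hi x) :
    (∃ uv, y = floorT lo uv) ∨ (∃ uv, y = ceilT hi uv) := by
  unfold succs at hy
  by_cases hb : x.2.2 = true
  · rw [if_pos hb] at hy; exact absurd hy (Finset.notMem_empty _)
  · rw [if_neg hb] at hy
    rcases Finset.mem_union.1 hy with h | h
    · rcases Finset.mem_union.1 h with h | h
      · exact Or.inr ⟨_, Finset.mem_singleton.1 h⟩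
      · split_ifs at h
        · exact Or.inl ⟨_, Finset.mem_singleton.1 h⟩
        · exact absurd h (Finset.notMem_empty _)
    · split_ifs at h
      · exact Or.inl ⟨_, Finset.mem_singleton.1 h⟩
      · exact absurd h (Finset.notMem_empty _)

lemma succs_ceil_empty (p q : ℕ) (lo hi : ℕ × ℕ → ℝ) (uv : ℕ × ℕ) :
    succs p q lo hi (ceilT hi uv) = ∅ := by
  simp [succs, ceilT]

lemma prov {p q : ℕ} {lo hi : ℕ × ℕ → ℝ} (r : Run p q lo hi) :
    ∀ t, t ≤ r.N → ∀ x ∈ r.H t,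
      x = floorT lo (1, 1) ∨ ∃ s, s < t ∧ x ∈ succs p q lo hi (r.pop s) := by
  intro t
  induction t with
  | zero =>
    intro _ x hx
    rw [r.init] at hx
    exact Or.inl (Finset.mem_singleton.1 hx)
  | succ t ih =>
    intro ht x hx
    have htN : t < r.N := Nat.lt_of_succ_le ht
    rw [r.step t htN] at hx
    rcases Finset.mem_union.1 hx with h | h
    · rcases ih (le_of_lt htN) x (Finset.mem_of_mem_erase h) with h1 | ⟨s, hs, h2⟩
      · exact Or.inl h1
      · exact Or.inr ⟨s, Nat.lt_succ_of_lt hs, h2⟩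
    · exact Or.inr ⟨t, Nat.lt_succ_self t, (Finset.mem_sdiff.1 h).1⟩

lemma wf {p q : ℕ} {lo hi : ℕ × ℕ → ℝ} (r : Run p q lo hi) :
    ∀ t, t ≤ r.N → ∀ x ∈ r.H t,
      (∃ uv, x = floorT lo uv) ∨ (∃ uv, x = ceilT hi uv) := by
  intro t ht x hx
  rcases prov r t ht x hx with h | ⟨s, _, h⟩
  · exact Or.inl ⟨_, h⟩
  · exact succs_shape p q lo hi _ x h

lemma stays {p q : ℕ} {lo hi : ℕ × ℕ → ℝ} (r : Run p q lo hi) {s : ℕ} {y : Tup}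
    (hs : s < r.N) (hy : y ∈ succs p q lo hi (r.pop s)) :
    ∀ w, s < w → w ≤ r.N → y ∈ r.H w ∨ ∃ t' < w, r.pop t' = y := by
  intro w
  induction w with
  | zero => intro h; omega
  | succ w ih =>
    intro hsw hwN
    have hwN' : w < r.N := Nat.lt_of_succ_le hwN
    rcases Nat.lt_or_ge s w with h | h
    · rcases ih h (le_of_lt hwN') with hmem | ⟨t', ht', he⟩
      · by_cases hpw : r.pop w = y
        · exact Or.inr ⟨w, Nat.lt_succ_self w, hpw⟩
        · refine Or.inl ?_
          rw [r.step w hwN']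
          exact Finset.mem_union_left _ (Finset.mem_erase.2 ⟨fun hh => hpw (hh ▸ rfl), hmem⟩)
      · exact Or.inr ⟨t', Nat.lt_succ_of_lt ht', he⟩
    · have hse : s = w := by omega
      subst hse
      by_cases hY : y ∈ (Finset.range (s + 1)).image r.pop
      · rcases Finset.mem_image.1 hY with ⟨t', ht', he⟩
        exact Or.inr ⟨t', Finset.mem_range.1 ht', he⟩
      · refine Or.inl ?_
        rw [r.step s hs]
        exact Finset.mem_union_right _ (Finset.mem_sdiff.2 ⟨hy, hY⟩)

lemma floorT_inj {lo : ℕ × ℕ → ℝ} {a b : ℕ × ℕ} (h : floorT lo a = floorT lo b) : a = b :=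
  congrArg (fun x : Tup => x.2.1) h

lemma ceilT_inj {hi : ℕ × ℕ → ℝ} {a b : ℕ × ℕ} (h : ceilT hi a = ceilT hi b) : a = b :=
  congrArg (fun x : Tup => x.2.1) h

lemma floorT_ne_ceilT {lo hi : ℕ × ℕ → ℝ} {a b : ℕ × ℕ} : floorT lo a ≠ ceilT hi b :=
  fun h => by simpa [floorT, ceilT] using congrArg (fun x : Tup => x.2.2) h

lemma tupLt_of_le_of_idxLt {x y : Tup} (h1 : x.1 ≤ y.1) (h2 : idxLt x.2.1 y.2.1) :
    tupLt x y := by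
  rcases lt_or_eq_of_le h1 with h | h
  · exact Or.inl h
  · exact Or.inr ⟨h, Or.inl h2⟩

lemma floor_pred {p q : ℕ} {lo hi : ℕ × ℕ → ℝ}
    (hmono : ∀ u1 v1 u2 v2, u1 ≤ u2 → v1 ≤ v2 → lo (u1, v1) ≤ lo (u2, v2))
    (r : Run p q lo hi) :
    ∀ t, t < r.N → ∀ u v, r.pop t = floorT lo (u, v) →
      (1 < u → ∃ s < t, r.pop s = floorT lo (u - 1, v)) ∧
      (1 < v → ∃ s < t, r.pop s = floorT lo (u, v - 1)) := by
  intro t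
  induction t using Nat.strong_induction_on with
  | _ t IH =>
  intro ht u v hpt
  have hmem := r.mem t ht
  rw [hpt] at hmem
  rcases prov r t (le_of_lt ht) _ hmem with h11 | ⟨s, hst, hins⟩
  · have h2 : (u, v) = ((1 : ℕ), (1 : ℕ)) := floorT_inj h11
    rw [Prod.ext_iff] at h2
    constructor <;> intro h1 <;> omega
  · have hsN : s < r.N := lt_trans hst ht
    rcases wf r s (le_of_lt hsN) _ (r.mem s hsN) with ⟨⟨a, b⟩, hsf⟩ | ⟨uv, hsc⟩
    swap
    · rw [hsc, succs_ceil_empty] at hins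
      exact absurd hins (Finset.notMem_empty _)
    rw [hsf, mem_succs_iff] at hins
    rcases hins with hc | ⟨hap, hf⟩ | ⟨hbq, hf⟩
    · exact absurd hc floorT_ne_ceilT
    · -- (u, v) = (a + 1, b)
      have h2 : (u, v) = (a + 1, b) := floorT_inj hf
      rw [Prod.ext_iff] at h2
      obtain ⟨hu, hv⟩ := h2
      constructor
      · intro _
        refine ⟨s, hst, ?_⟩
        rw [hsf]
        congr 1
        rw [Prod.ext_iff]
        constructor <;> simp <;> omega
      · intro hv1
        -- 1 < v, v = b; apply IH at s to get floorT lo (u-1, v-1) popped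
        obtain ⟨s2, hs2, hps2⟩ :=
          ((IH s hst) hsN (u - 1) v (by rw [hsf]; congr 1; rw [Prod.ext_iff]; constructor <;> simp <;> omega)).2 hv1
        -- floorT lo (u, v-1) ∈ succs (pop s2)
        have hins2 : floorT lo (u, v - 1) ∈ succs p q lo hi (r.pop s2) := by
          rw [hps2, mem_succs_iff]
          refine Or.inr (Or.inl ⟨by omega, ?_⟩)
          congr 1
          rw [Prod.ext_iff]
          constructor <;> simp <;> omega
        have hs2N : s2 < r.N := by omega
        rcases stays r hs2N hins2 t (by omega) (le_of_lt ht) with hH | ⟨t', ht', he⟩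
        · exfalso
          refine r.isMin t ht _ hH ?_
          rw [hpt]
          refine tupLt_of_le_of_idxLt ?_ ?_
          · show lo (u, v - 1) ≤ lo (u, v)
            exact hmono u (v - 1) u v le_rfl (by omega)
          · exact Or.inr ⟨rfl, by show v - 1 < v; omega⟩
        · exact ⟨t', by omega, he⟩
    · -- (u, v) = (a, b + 1)
      have h2 : (u, v) = (a, b + 1) := floorT_inj hf
      rw [Prod.ext_iff] at h2
      obtain ⟨hu, hv⟩ := h2
      constructor
      · intro hu1
        obtain ⟨s2, hs2, hps2⟩ :=
          ((IH s hst) hsN u (v - 1) (by rw [hsf]; congr 1; rw [Prod.ext_iff]; constructor <;> simp <;> omega)).1 hu1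
        have hins2 : floorT lo (u - 1, v) ∈ succs p q lo hi (r.pop s2) := by
          rw [hps2, mem_succs_iff]
          refine Or.inr (Or.inr ⟨by omega, ?_⟩)
          congr 1
          rw [Prod.ext_iff]
          constructor <;> simp <;> omega
        have hs2N : s2 < r.N := by omega
        rcases stays r hs2N hins2 t (by omega) (le_of_lt ht) with hH | ⟨t', ht', he⟩
        · exfalso
          refine r.isMin t ht _ hH ?_
          rw [hpt]
          refine tupLt_of_le_of_idxLt ?_ ?_
          · show lo (u - 1, v) ≤ lo (u, v)
            exact hmono (u - 1) v u v (by omega) le_rfl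
          · exact Or.inl (by show u - 1 < u; omega)
        · exact ⟨t', by omega, he⟩
      · intro _
        refine ⟨s, hst, ?_⟩
        rw [hsf]
        congr 1
        rw [Prod.ext_iff]
        constructor <;> simp <;> omega

/-- In the layer-product popping process, whenever ⌈(u,v)⌉ is
popped, ⌈(u−1,v)⌉ (if u > 1) and ⌈(u,v−1)⌉ (if v > 1) were popped earlier. -/
theorem ceil_popped_implies_predecessors_popped (p q : ℕ) (hp : 1 ≤ p) (hq : 1 ≤ q)
    (X Y : ℕ → Finset ℝ)
    (hXne : ∀ u, (X u).Nonempty) (hYne : ∀ v, (Y v).Nonempty)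
    (hXord : ∀ u v, u < v → ∀ a ∈ X u, ∀ b ∈ X v, a ≤ b)
    (hYord : ∀ u v, u < v → ∀ a ∈ Y u, ∀ b ∈ Y v, a ≤ b)
    (lo hi : ℕ × ℕ → ℝ)
    (hlo : ∀ uv : ℕ × ℕ, lo uv = (X uv.1).min' (hXne uv.1) + (Y uv.2).min' (hYne uv.2))
    (hhi : ∀ uv : ℕ × ℕ, hi uv = (X uv.1).max' (hXne uv.1) + (Y uv.2).max' (hYne uv.2))
    (r : Run p q lo hi) (t : ℕ) (ht : t < r.N) (u v : ℕ)
    (hpop : r.pop t = ceilT hi (u, v)) :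
    (1 < u → ∃ t' < t, r.pop t' = ceilT hi (u - 1, v)) ∧
    (1 < v → ∃ t' < t, r.pop t' = ceilT hi (u, v - 1)) := by
  have hXmin : ∀ u1 u2, u1 ≤ u2 → (X u1).min' (hXne u1) ≤ (X u2).min' (hXne u2) := by
    intro u1 u2 h
    rcases lt_or_eq_of_le h with h | h
    · exact hXord u1 u2 h _ (Finset.min'_mem _ _) _ (Finset.min'_mem _ _)
    · subst h; exact le_rfl
  have hYmin : ∀ u1 u2, u1 ≤ u2 → (Y u1).min' (hYne u1) ≤ (Y u2).min' (hYne u2) := by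
    intro u1 u2 h
    rcases lt_or_eq_of_le h with h | h
    · exact hYord u1 u2 h _ (Finset.min'_mem _ _) _ (Finset.min'_mem _ _)
    · subst h; exact le_rfl
  have hXmax : ∀ u1 u2, u1 ≤ u2 → (X u1).max' (hXne u1) ≤ (X u2).max' (hXne u2) := by
    intro u1 u2 h
    rcases lt_or_eq_of_le h with h | h
    · exact hXord u1 u2 h _ (Finset.max'_mem _ _) _ (Finset.max'_mem _ _)
    · subst h; exact le_rfl
  have hYmax : ∀ u1 u2, u1 ≤ u2 → (Y u1).max' (hYne u1) ≤ (Y u2).max' (hYne u2) := by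
    intro u1 u2 h
    rcases lt_or_eq_of_le h with h | h
    · exact hYord u1 u2 h _ (Finset.max'_mem _ _) _ (Finset.max'_mem _ _)
    · subst h; exact le_rfl
  have hmono_lo : ∀ u1 v1 u2 v2, u1 ≤ u2 → v1 ≤ v2 → lo (u1, v1) ≤ lo (u2, v2) := by
    intro u1 v1 u2 v2 h1 h2
    rw [hlo, hlo]
    exact add_le_add (hXmin _ _ h1) (hYmin _ _ h2)
  have hmono_hi : ∀ u1 v1 u2 v2, u1 ≤ u2 → v1 ≤ v2 → hi (u1, v1) ≤ hi (u2, v2) := by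
    intro u1 v1 u2 v2 h1 h2
    rw [hhi, hhi]
    exact add_le_add (hXmax _ _ h1) (hYmax _ _ h2)
  -- Step 1: the floor tuple of (u,v) was popped strictly before t.
  obtain ⟨t1, ht1, hpt1⟩ : ∃ t1 < t, r.pop t1 = floorT lo (u, v) := by
    have hmem := r.mem t ht
    rw [hpop] at hmem
    rcases prov r t (le_of_lt ht) _ hmem with h11 | ⟨s, hst, hins⟩
    · exact absurd h11.symm floorT_ne_ceilT
    · have hsN : s < r.N := lt_trans hst ht
      rcases wf r s (le_of_lt hsN) _ (r.mem s hsN) with ⟨⟨a, b⟩, hsf⟩ | ⟨uv, hsc⟩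
      swap
      · rw [hsc, succs_ceil_empty] at hins
        exact absurd hins (Finset.notMem_empty _)
      rw [hsf, mem_succs_iff] at hins
      rcases hins with hc | ⟨_, hf⟩ | ⟨_, hf⟩
      · have hab : ((u, v) : ℕ × ℕ) = (a, b) := ceilT_inj hc
        exact ⟨s, hst, by rw [hsf, hab]⟩
      · exact absurd hf.symm floorT_ne_ceilT
      · exact absurd hf.symm floorT_ne_ceilT
  have ht1N : t1 < r.N := lt_trans ht1 ht
  constructor
  · intro hu1
    obtain ⟨s2, hs2, hps2⟩ := (floor_pred hmono_lo r t1 ht1N u v hpt1).1 hu1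
    have hins2 : ceilT hi (u - 1, v) ∈ succs p q lo hi (r.pop s2) := by
      rw [hps2, mem_succs_iff]
      exact Or.inl rfl
    have hs2N : s2 < r.N := by omega
    rcases stays r hs2N hins2 t (by omega) (le_of_lt ht) with hH | ⟨t', ht', he⟩
    · exfalso
      refine r.isMin t ht _ hH ?_
      rw [hpop]
      refine tupLt_of_le_of_idxLt ?_ ?_
      · show hi (u - 1, v) ≤ hi (u, v)
        exact hmono_hi (u - 1) v u v (by omega) le_rfl
      · exact Or.inl (by show u - 1 < u; omega)
    · exact ⟨t', ht', he⟩
  · intro hv1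
    obtain ⟨s2, hs2, hps2⟩ := (floor_pred hmono_lo r t1 ht1N u v hpt1).2 hv1
    have hins2 : ceilT hi (u, v - 1) ∈ succs p q lo hi (r.pop s2) := by
      rw [hps2, mem_succs_iff]
      exact Or.inl rfl
    have hs2N : s2 < r.N := by omega
    rcases stays r hs2N hins2 t (by omega) (le_of_lt ht) with hH | ⟨t', ht', he⟩
    · exfalso
      refine r.isMin t ht _ hH ?_
      rw [hpop]
      refine tupLt_of_le_of_idxLt ?_ ?_
      · show hi (u, v - 1) ≤ hi (u, v)
        exact hmono_hi u (v - 1) u v le_rfl (by omega)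
      · exact Or.inr ⟨rfl, by show v - 1 < v; omega⟩
    · exact ⟨t', ht', he⟩
end

section
/- In the layer-product popping process, all tuples (both minimum tuples ⌊(u,v)⌋ and maximum tuples ⌈(u,v)⌉) are popped from the heap in ascending lexicographic order of their values. -/
/-- A run of the layer-product popping process: `H t` is the heap content before
the `t`-th pop, `pop t` is the tuple popped at time `t`, and `N` is the number of
pops performed.  The heap starts with ⌊(1,1)⌋, each pop removes a minimum tuple
and inserts its successors, avoiding duplicates of already-popped tuples. -/

lemma idxLt_trans' {a b c : ℕ × ℕ} (h1 : idxLt a b) (h2 : idxLt b c) : idxLt a c := by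
  unfold idxLt at *; omega

lemma tupLt_trans' {a b c : Tup} (h1 : tupLt a b) (h2 : tupLt b c) : tupLt a c := by
  unfold tupLt at *
  rcases h1 with h1 | ⟨e1, h1⟩
  · rcases h2 with h2 | ⟨e2, _⟩
    · exact Or.inl (h1.trans h2)
    · exact Or.inl (e2 ▸ h1)
  · rcases h2 with h2 | ⟨e2, h2⟩
    · exact Or.inl (e1 ▸ h2)
    · refine Or.inr ⟨e1.trans e2, ?_⟩
      rcases h1 with h1 | ⟨i1, hb1⟩
      · rcases h2 with h2 | ⟨i2, _⟩
        · exact Or.inl (idxLt_trans' h1 h2)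
        · exact Or.inl (i2 ▸ h1)
      · rcases h2 with h2 | ⟨i2, hb2⟩
        · exact Or.inl (i1 ▸ h2)
        · exact Or.inr ⟨i1.trans i2, lt_trans hb1 hb2⟩

lemma tupLt_total' (a b : Tup) : tupLt a b ∨ a = b ∨ tupLt b a := by
  obtain ⟨va, ⟨ia, ja⟩, fa⟩ := a
  obtain ⟨vb, ⟨ib, jb⟩, fb⟩ := b
  unfold tupLt idxLt
  simp only [Prod.mk.injEq]
  rcases lt_trichotomy va vb with h | h | h
  · exact Or.inl (Or.inl h)
  · subst h
    rcases Nat.lt_trichotomy ia ib with h | h | h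
    · exact Or.inl (Or.inr ⟨rfl, Or.inl (Or.inl h)⟩)
    · subst h
      rcases Nat.lt_trichotomy ja jb with h | h | h
      · exact Or.inl (Or.inr ⟨rfl, Or.inl (Or.inr ⟨rfl, h⟩)⟩)
      · subst h
        cases fa <;> cases fb
        · exact Or.inr (Or.inl ⟨rfl, ⟨rfl, rfl⟩, rfl⟩)
        · exact Or.inl (Or.inr ⟨rfl, Or.inr ⟨⟨rfl, rfl⟩, by decide⟩⟩)
        · exact Or.inr (Or.inr (Or.inr ⟨rfl, Or.inr ⟨⟨rfl, rfl⟩, by decide⟩⟩))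
        · exact Or.inr (Or.inl ⟨rfl, ⟨rfl, rfl⟩, rfl⟩)
      · exact Or.inr (Or.inr (Or.inr ⟨rfl, Or.inl (Or.inr ⟨rfl, h⟩)⟩))
    · exact Or.inr (Or.inr (Or.inr ⟨rfl, Or.inl (Or.inl h)⟩))
  · exact Or.inr (Or.inr (Or.inl h))

/-- every element of the heap is a floor or ceil tuple of its own index -/
lemma heap_wf {p q : ℕ} {lo hi : ℕ × ℕ → ℝ} (r : Run p q lo hi) :
    ∀ t, t ≤ r.N → ∀ x ∈ r.H t, x = floorT lo x.2.1 ∨ x = ceilT hi x.2.1 := by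
  intro t
  induction t with
  | zero =>
    intro _ x hx
    rw [r.init, Finset.mem_singleton] at hx
    left; rw [hx]; rfl
  | succ t ih =>
    intro ht x hx
    rw [r.step t (by omega)] at hx
    rcases Finset.mem_union.1 hx with h | h
    · exact ih (by omega) x (Finset.mem_of_mem_erase h)
    · have hs := (Finset.mem_sdiff.1 h).1
      unfold succs at hs
      by_cases hb : (r.pop t).2.2 = true
      · rw [if_pos hb] at hs; exact absurd hs (Finset.notMem_empty x)
      · rw [if_neg hb] at hs
        rcases Finset.mem_union.1 hs with hs | hs
        · rcases Finset.mem_union.1 hs with hs | hs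
          · right; rw [Finset.mem_singleton.1 hs]; rfl
          · split_ifs at hs with hr
            · left; rw [Finset.mem_singleton.1 hs]; rfl
            · exact absurd hs (Finset.notMem_empty x)
        · split_ifs at hs with hr
          · left; rw [Finset.mem_singleton.1 hs]; rfl
          · exact absurd hs (Finset.notMem_empty x)

/-- In the layer-product popping process, all tuples (minimum
tuples ⌊(u,v)⌋ and maximum tuples ⌈(u,v)⌉ alike) are popped in ascending
lexicographic order. -/
theorem pops_ascending (p q : ℕ) (hp : 1 ≤ p) (hq : 1 ≤ q)
    (X Y : ℕ → Finset ℝ)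
    (hXne : ∀ u, (X u).Nonempty) (hYne : ∀ v, (Y v).Nonempty)
    (hXord : ∀ u v, u < v → ∀ a ∈ X u, ∀ b ∈ X v, a ≤ b)
    (hYord : ∀ u v, u < v → ∀ a ∈ Y u, ∀ b ∈ Y v, a ≤ b)
    (lo hi : ℕ × ℕ → ℝ)
    (hlo : ∀ uv : ℕ × ℕ, lo uv = (X uv.1).min' (hXne uv.1) + (Y uv.2).min' (hYne uv.2))
    (hhi : ∀ uv : ℕ × ℕ, hi uv = (X uv.1).max' (hXne uv.1) + (Y uv.2).max' (hYne uv.2))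
    (r : Run p q lo hi) (t1 t2 : ℕ) (h12 : t1 < t2) (ht2 : t2 < r.N) :
    tupLt (r.pop t1) (r.pop t2) ∨ r.pop t1 = r.pop t2 := by
  have hmono1 : ∀ u v : ℕ, lo (u, v) ≤ lo (u + 1, v) := by
    intro u v
    simp only [hlo]
    have := hXord u (u + 1) (by omega) _ (Finset.min'_mem (X u) (hXne u))
      _ (Finset.min'_mem (X (u + 1)) (hXne (u + 1)))
    linarith
  have hmono2 : ∀ u v : ℕ, lo (u, v) ≤ lo (u, v + 1) := by
    intro u v
    simp only [hlo]
    have := hYord v (v + 1) (by omega) _ (Finset.min'_mem (Y v) (hYne v))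
      _ (Finset.min'_mem (Y (v + 1)) (hYne (v + 1)))
    linarith
  have hlohi : ∀ uv : ℕ × ℕ, lo uv ≤ hi uv := by
    intro uv
    rw [hlo, hhi]
    have h1 := Finset.min'_le (X uv.1) _ (Finset.max'_mem (X uv.1) (hXne uv.1))
    have h2 := Finset.min'_le (Y uv.2) _ (Finset.max'_mem (Y uv.2) (hYne uv.2))
    linarith
  have hidx1 : ∀ uv : ℕ × ℕ, ¬ idxLt uv uv := by
    intro uv; simp only [idxLt]; omega
  have hidx2 : ∀ uv : ℕ × ℕ, ¬ idxLt (uv.1 + 1, uv.2) uv := by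
    intro uv; simp only [idxLt]; omega
  have hidx3 : ∀ uv : ℕ × ℕ, ¬ idxLt (uv.1, uv.2 + 1) uv := by
    intro uv; simp only [idxLt]; omega
  have hsucc : ∀ t < r.N, ∀ x ∈ succs p q lo hi (r.pop t), ¬ tupLt x (r.pop t) := by
    intro t ht x hx
    rcases heap_wf r t (le_of_lt ht) _ (r.mem t ht) with hf | hc
    · set uv := (r.pop t).2.1 with huv
      rw [hf] at hx
      have hx' : x ∈ ({ceilT hi uv} : Finset Tup)
          ∪ (if uv.1 + 1 ≤ p then {floorT lo (uv.1 + 1, uv.2)} else ∅)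
          ∪ (if uv.2 + 1 ≤ q then {floorT lo (uv.1, uv.2 + 1)} else ∅) := by
        simpa [succs, floorT] using hx
      rw [hf]
      rcases Finset.mem_union.1 hx' with h | h
      · rcases Finset.mem_union.1 h with h | h
        · -- x = ceilT hi uv
          rw [Finset.mem_singleton.1 h]
          rintro (hcon | ⟨e, hcon | ⟨e2, hcon⟩⟩)
          · exact absurd hcon (not_lt.2 (hlohi uv))
          · exact hidx1 uv hcon
          · have hb := Bool.lt_iff.mp hcon; simp [ceilT, floorT] at hb
        · -- x = floorT lo (uv.1+1, uv.2)
          split_ifs at h with hrange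
          · rw [Finset.mem_singleton.1 h]
            rintro (hcon | ⟨e, hcon | ⟨e2, hcon⟩⟩)
            · exact absurd hcon (not_lt.2 (hmono1 uv.1 uv.2))
            · exact hidx2 uv hcon
            · have hb := Bool.lt_iff.mp hcon; simp [ceilT, floorT] at hb
          · exact absurd h (Finset.notMem_empty x)
      · -- x = floorT lo (uv.1, uv.2+1)
        split_ifs at h with hrange
        · rw [Finset.mem_singleton.1 h]
          rintro (hcon | ⟨e, hcon | ⟨e2, hcon⟩⟩)
          · exact absurd hcon (not_lt.2 (hmono2 uv.1 uv.2))
          · exact hidx3 uv hcon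
          · have hb := Bool.lt_iff.mp hcon; simp [ceilT, floorT] at hb
        · exact absurd h (Finset.notMem_empty x)
    · -- pop t is a max tuple: succs is empty
      have hflag : (r.pop t).2.2 = true := by rw [hc]; rfl
      unfold succs at hx
      rw [if_pos hflag] at hx
      exact absurd hx (Finset.notMem_empty x)
  have hstep1 : ∀ t, t + 1 < r.N → ¬ tupLt (r.pop (t + 1)) (r.pop t) := by
    intro t ht
    have hm := r.mem (t + 1) ht
    rw [r.step t (by omega)] at hm
    rcases Finset.mem_union.1 hm with h | h
    · exact r.isMin t (by omega) _ (Finset.mem_of_mem_erase h)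
    · exact hsucc t (by omega) _ (Finset.mem_sdiff.1 h).1
  have hstep2 : ∀ t, t + 1 < r.N → tupLt (r.pop t) (r.pop (t + 1)) ∨ r.pop t = r.pop (t + 1) := by
    intro t ht
    rcases tupLt_total' (r.pop t) (r.pop (t + 1)) with h | h | h
    · exact Or.inl h
    · exact Or.inr h
    · exact absurd h (hstep1 t ht)
  have key : ∀ k t, t + k < r.N → tupLt (r.pop t) (r.pop (t + k)) ∨ r.pop t = r.pop (t + k) := by
    intro k
    induction k with
    | zero => intro t _; exact Or.inr rfl
    | succ k ih =>
      intro t ht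
      have h1 := ih t (by omega)
      have h2 := hstep2 (t + k) (by omega)
      rcases h1 with h1 | h1 <;> rcases h2 with h2 | h2
      · exact Or.inl (tupLt_trans' h1 h2)
      · exact Or.inl (h2 ▸ h1)
      · exact Or.inl (by rw [h1]; exact h2)
      · exact Or.inr (h1.trans h2)
  have hfin := key (t2 - t1) t1 (by omega)
  rwa [show t1 + (t2 - t1) = t2 by omega] at hfin
end

section
/- Let S be a collection of layer products such that every layer product (u',v') whose minimum value is at most a threshold τ is included in S, where τ is the k-th smallest value of X+Y and S contains at least k elements total. Then S contains the k smallest values of X+Y (counted with multiplicity). -/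
/-! Every value among the `k` smallest of `M` is at most `τ`, while a layer product left out of
`T` has all its values above `τ`. So, writing `M` as `S` plus the discarded layer products, the
`k` smallest values are disjoint from the discarded part and must therefore lie in `S`. -/

theorem Multiset.le_of_le_add_of_disjoint {α : Type*} [DecidableEq α] {s t u : Multiset α}
    (h : s ≤ t + u) (hsu : Disjoint s u) : s ≤ t := by
  rw [Multiset.le_iff_count] at h ⊢
  intro a
  by_cases ha : a ∈ s
  · simpa [Multiset.count_eq_zero_of_notMem (Multiset.disjoint_left.1 hsu ha)] using h a
  · simp [Multiset.count_eq_zero_of_notMem ha]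

theorem List.Pairwise.le_getD_pred_of_mem_take {α : Type*} [Preorder α] {l : List α}
    (hl : l.Pairwise (· ≤ ·)) {k : ℕ} (hk : k ≤ l.length) (d : α) {x : α} (hx : x ∈ l.take k) :
    x ≤ l.getD (k - 1) d := by
  obtain ⟨i, hi, rfl⟩ := List.mem_iff_getElem.1 hx
  have hik : i < k := hi.trans_le (List.length_take_le k l)
  rw [List.getElem_take, List.getD_eq_getElem _ _ (by omega)]
  exact hl.rel_get_of_le (a := ⟨i, by omega⟩) (b := ⟨k - 1, by omega⟩) (Fin.mk_le_mk.2 (by omega))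

theorem selected_layer_products_contain_k_smallest_general
    {ι : Type*} [DecidableEq ι] (P : Finset ι) (part : ι → Multiset ℝ)
    (M : Multiset ℝ) (hM : M = ∑ i ∈ P, part i)
    (k : ℕ) (hkM : k ≤ Multiset.card M)
    (τ : ℝ) (hτ : τ = (Multiset.sort M (· ≤ ·)).getD (k - 1) 0)
    (T : Finset ι) (hTP : T ⊆ P)
    (hcover : ∀ i ∈ P, (∃ x ∈ part i, x ≤ τ) → i ∈ T)
    (S : Multiset ℝ) (hS : S = ∑ i ∈ T, part i) :
    (↑((Multiset.sort M (· ≤ ·)).take k) : Multiset ℝ) ≤ S := by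
  have hprefix : (↑((Multiset.sort M (· ≤ ·)).take k) : Multiset ℝ) ≤ M := by
    conv_rhs => rw [← Multiset.sort_eq M (· ≤ ·)]
    exact (List.take_sublist k _).subperm
  have hsplit : M = S + ∑ i ∈ P \ T, part i := by
    rw [hM, hS, ← Finset.sum_sdiff hTP, add_comm]
  refine Multiset.le_of_le_add_of_disjoint (hprefix.trans_eq hsplit)
    (Multiset.disjoint_left.2 fun {x} hx hx' => ?_)
  have hxτ : x ≤ τ := hτ ▸ (Multiset.pairwise_sort M _).le_getD_pred_of_mem_take
    (by rwa [Multiset.length_sort]) 0 hx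
  obtain ⟨i, hi, hxi⟩ := Multiset.mem_sum.1 hx'
  exact (Finset.mem_sdiff.1 hi).2 (hcover i (Finset.mem_sdiff.1 hi).1 ⟨x, hxi, hxτ⟩)

/-- Let the multiset X+Y be partitioned into layer products
`part i`, i ∈ P.  Let τ be the k-th smallest value of X+Y.  If T ⊆ P contains
every layer product whose minimum value is ≤ τ, and the union S of the layer
products in T has at least k elements, then S contains the k smallest values of
X+Y (with multiplicity). -/
theorem selected_layer_products_contain_k_smallest
    {ι : Type*} [DecidableEq ι] (P : Finset ι) (part : ι → Multiset ℝ)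
    (M : Multiset ℝ) (hM : M = ∑ i ∈ P, part i)
    (k : ℕ) (hk : 1 ≤ k) (hkM : k ≤ Multiset.card M)
    (τ : ℝ) (hτ : τ = (Multiset.sort M (· ≤ ·)).getD (k - 1) 0)
    (T : Finset ι) (hTP : T ⊆ P)
    (hcover : ∀ i ∈ P, (∃ x ∈ part i, x ≤ τ) → i ∈ T)
    (S : Multiset ℝ) (hS : S = ∑ i ∈ T, part i)
    (hcard : k ≤ Multiset.card S) :
    (↑((Multiset.sort M (· ≤ ·)).take k) : Multiset ℝ) ≤ S :=
  selected_layer_products_contain_k_smallest_general P part M hM k hkM τ hτ T hTP hcover S hS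
end

section
/- If in phase 1 the process stops when the accumulated size s of popped-max layer products first reaches s ≥ k, and layers of X and Y grow geometrically with ratio α, then s < k + |X^(u)|·|Y^(v)| where (u,v) is the last layer product counted, and moreover s ∈ O(k): specifically s ≤ k + α·k when k > 1 (w.l.o.g. u > 1), and s = 1 when k = 1. -/
/-!
The last popped layer product overshoots `k` by at most its own size, since the sum before it
was still below `k`. For `k = 1` nothing after the initial product `(1, 1)` of size `1` can be
popped. For `k > 1` the last product `(u, v)` has a coordinate `> 1`, say `u`; by convexity
`(u - 1, v)` was popped earlier, so its size `|X^(u)|·|Y^(v)| / α` is part of a sum below `k`,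
and the overshoot is at most `α·k`.
-/

open Finset

lemma eq_mul_apply_pred_of_geometric {s : ℕ → ℝ} {α : ℝ}
    (hgeo : ∀ u, 1 ≤ u → s (u + 1) = α * s u) {u : ℕ} (hu : 1 < u) :
    s u = α * s (u - 1) := by
  obtain ⟨n, rfl⟩ : ∃ n, u = n + 2 := ⟨u - 2, by omega⟩
  exact hgeo (n + 1) (by omega)

lemma eq_zero_of_sum_range_lt_apply_zero {f : ℕ → ℝ} (hf : ∀ t, 0 ≤ f t) {T : ℕ}
    (h : ∑ t ∈ range T, f t < f 0) : T = 0 := by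
  by_contra hT
  exact h.not_ge (single_le_sum (fun t _ => hf t) (mem_range.mpr (Nat.pos_of_ne_zero hT)))

lemma sum_range_succ_le_add_mul_of_le_mul {f : ℕ → ℝ} (hf : ∀ t, 0 ≤ f t) {α c : ℝ}
    (hα : 0 ≤ α) {T t' : ℕ} (ht' : t' < T) (hpred : f T ≤ α * f t')
    (hfirst : ∑ t ∈ range T, f t < c) :
    ∑ t ∈ range (T + 1), f t ≤ c + α * c := by
  have hle : f t' ≤ c :=
    (single_le_sum (fun t _ => hf t) (mem_range.mpr ht')).trans hfirst.le
  rw [sum_range_succ]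
  nlinarith

theorem phase1_size_bound_general (α : ℝ) (hα : 1 < α) (k : ℕ)
    (sx sy : ℕ → ℝ) (hsx1 : sx 1 = 1) (hsy1 : sy 1 = 1)
    (hsxpos : ∀ u, 0 < sx u) (hsypos : ∀ v, 0 < sy v)
    (hsxgeo : ∀ u, 1 ≤ u → sx (u + 1) = α * sx u)
    (hsygeo : ∀ v, 1 ≤ v → sy (v + 1) = α * sy v)
    (uv : ℕ → ℕ × ℕ) (T : ℕ)
    (hstart : uv 0 = (1, 1))
    (hconv1 : ∀ t ≤ T, 1 < (uv t).1 → ∃ t' < t, uv t' = ((uv t).1 - 1, (uv t).2))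
    (hconv2 : ∀ t ≤ T, 1 < (uv t).2 → ∃ t' < t, uv t' = ((uv t).1, (uv t).2 - 1))
    (hwlog : 1 < k → 1 < (uv T).1 ∨ 1 < (uv T).2)
    (hfirst : (∑ t ∈ Finset.range T, sx (uv t).1 * sy (uv t).2) < k) :
    (∑ t ∈ Finset.range (T + 1), sx (uv t).1 * sy (uv t).2)
        < (k : ℝ) + sx (uv T).1 * sy (uv T).2 ∧
    (k = 1 → (∑ t ∈ Finset.range (T + 1), sx (uv t).1 * sy (uv t).2) = 1) ∧
    (1 < k → (∑ t ∈ Finset.range (T + 1), sx (uv t).1 * sy (uv t).2)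
        ≤ (k : ℝ) + α * k) := by
  have hf : ∀ t, 0 ≤ sx (uv t).1 * sy (uv t).2 := fun t => (mul_pos (hsxpos _) (hsypos _)).le
  refine ⟨by rw [sum_range_succ]; linarith, fun hk1 => ?_, fun hk1 => ?_⟩
  · have hT : T = 0 :=
      eq_zero_of_sum_range_lt_apply_zero hf (by simpa [hstart, hsx1, hsy1, hk1] using hfirst)
    simp [hT, hstart, hsx1, hsy1]
  · obtain ⟨t', ht', hpred⟩ :
        ∃ t' < T, sx (uv T).1 * sy (uv T).2 ≤ α * (sx (uv t').1 * sy (uv t').2) := by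
      rcases hwlog hk1 with hu | hv
      · obtain ⟨t', ht', heq⟩ := hconv1 T le_rfl hu
        refine ⟨t', ht', le_of_eq ?_⟩
        rw [heq, eq_mul_apply_pred_of_geometric hsxgeo hu, mul_assoc]
      · obtain ⟨t', ht', heq⟩ := hconv2 T le_rfl hv
        refine ⟨t', ht', le_of_eq ?_⟩
        rw [heq, eq_mul_apply_pred_of_geometric hsygeo hv, mul_left_comm]
    exact sum_range_succ_le_add_mul_of_le_mul hf (by linarith) ht' hpred hfirst

/-- In phase 1, max layer-product tuples with indices `uv t` are
popped in order t = 0, 1, ..., T, stopping at the first time T at which the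
accumulated size s = Σ_{t ≤ T} |X^(u_t)|·|Y^(v_t)| reaches s ≥ k.  Layer sizes
grow geometrically with ratio α > 1 starting from size 1, and popping a max
tuple with a coordinate > 1 requires having popped the max tuple of the
neighboring smaller layer product (convexity).  Then s < k + |X^(u_T)|·|Y^(v_T)|,
and s ∈ O(k): s = 1 when k = 1, and s ≤ k + α·k when k > 1. -/
theorem phase1_size_bound (α : ℝ) (hα : 1 < α) (k : ℕ) (hk : 1 ≤ k)
    (sx sy : ℕ → ℝ) (hsx1 : sx 1 = 1) (hsy1 : sy 1 = 1)
    (hsxpos : ∀ u, 0 < sx u) (hsypos : ∀ v, 0 < sy v)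
    (hsxgeo : ∀ u, 1 ≤ u → sx (u + 1) = α * sx u)
    (hsygeo : ∀ v, 1 ≤ v → sy (v + 1) = α * sy v)
    (uv : ℕ → ℕ × ℕ) (T : ℕ)
    (hvalid : ∀ t ≤ T, 1 ≤ (uv t).1 ∧ 1 ≤ (uv t).2)
    (hstart : uv 0 = (1, 1))
    (hinj : ∀ t ≤ T, ∀ t' ≤ T, uv t = uv t' → t = t')
    (hconv1 : ∀ t ≤ T, 1 < (uv t).1 → ∃ t' < t, uv t' = ((uv t).1 - 1, (uv t).2))
    (hconv2 : ∀ t ≤ T, 1 < (uv t).2 → ∃ t' < t, uv t' = ((uv t).1, (uv t).2 - 1))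
    (hwlog : 1 < k → 1 < (uv T).1 ∨ 1 < (uv T).2)
    (hstop : (k : ℝ) ≤ ∑ t ∈ Finset.range (T + 1), sx (uv t).1 * sy (uv t).2)
    (hfirst : (∑ t ∈ Finset.range T, sx (uv t).1 * sy (uv t).2) < k) :
    (∑ t ∈ Finset.range (T + 1), sx (uv t).1 * sy (uv t).2)
        < (k : ℝ) + sx (uv T).1 * sy (uv T).2 ∧
    (k = 1 → (∑ t ∈ Finset.range (T + 1), sx (uv t).1 * sy (uv t).2) = 1) ∧
    (1 < k → (∑ t ∈ Finset.range (T + 1), sx (uv t).1 * sy (uv t).2)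
        ≤ (k : ℝ) + α * k) :=
  phase1_size_bound_general α hα k sx sy hsx1 hsy1 hsxpos hsypos hsxgeo hsygeo uv T hstart hconv1
    hconv2 hwlog hfirst
end

section
/- For layer products along the first row (v = 1, where |Y^(1)| = 1), the popping process maintains at most one tuple of the form ⌊(u,1)⌋ in the heap at any time, and popping ⌊(u,1)⌋ with u > 1 requires having previously popped ⌈(u−1,1)⌉. -/
lemma mem_succs {p q : ℕ} {lo hi : ℕ × ℕ → ℝ} {y x : Tup} :
    x ∈ succs p q lo hi y ↔ y.2.2 = false ∧
      (x = ceilT hi y.2.1 ∨ (y.2.1.1 + 1 ≤ p ∧ x = floorT lo (y.2.1.1+1, y.2.1.2))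
        ∨ (y.2.1.2 + 1 ≤ q ∧ x = floorT lo (y.2.1.1, y.2.1.2+1))) := by
  rcases hb : y.2.2 with _ | _
  · simp only [succs, hb, Bool.false_eq_true, if_false, Finset.mem_union]
    constructor
    · rintro ((h | h) | h)
      · exact ⟨trivial, Or.inl (Finset.mem_singleton.1 h)⟩
      · split_ifs at h with hc
        · exact ⟨trivial, Or.inr (Or.inl ⟨hc, Finset.mem_singleton.1 h⟩)⟩
        · simp at h
      · split_ifs at h with hc
        · exact ⟨trivial, Or.inr (Or.inr ⟨hc, Finset.mem_singleton.1 h⟩)⟩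
        · simp at h
    · rintro ⟨-, h | ⟨hc, h⟩ | ⟨hc, h⟩⟩
      · exact Or.inl (Or.inl (Finset.mem_singleton.2 h))
      · exact Or.inl (Or.inr (by simp [hc, h]))
      · exact Or.inr (by simp [hc, h])
  · simp [succs, hb]

def WF (lo hi : ℕ × ℕ → ℝ) (x : Tup) : Prop :=
  1 ≤ x.2.1.1 ∧ 1 ≤ x.2.1.2 ∧
    ((x.2.2 = true ∧ x = ceilT hi x.2.1) ∨ (x.2.2 = false ∧ x = floorT lo x.2.1))

lemma wf_all {p q : ℕ} {lo hi : ℕ × ℕ → ℝ} (r : Run p q lo hi) :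
    ∀ t, t ≤ r.N → ∀ x ∈ r.H t, WF lo hi x := by
  intro t
  induction t with
  | zero =>
    intro _ x hx
    rw [r.init] at hx
    simp only [Finset.mem_singleton] at hx
    subst hx
    exact ⟨le_refl 1, le_refl 1, Or.inr ⟨rfl, rfl⟩⟩
  | succ t ih =>
    intro ht x hx
    have htN : t < r.N := ht
    rw [r.step t htN] at hx
    rcases Finset.mem_union.1 hx with h | h
    · exact ih htN.le x (Finset.mem_of_mem_erase h)
    · have hs := (Finset.mem_sdiff.1 h).1
      have hpop := ih htN.le _ (r.mem t htN)
      rcases mem_succs.1 hs with ⟨hf, h1 | ⟨_, h1⟩ | ⟨_, h1⟩⟩ <;> subst h1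
      · exact ⟨hpop.1, hpop.2.1, Or.inl ⟨rfl, rfl⟩⟩
      · exact ⟨Nat.le_add_left 1 _, hpop.2.1, Or.inr ⟨rfl, rfl⟩⟩
      · exact ⟨hpop.1, Nat.le_add_left 1 _, Or.inr ⟨rfl, rfl⟩⟩

lemma persist {p q : ℕ} {lo hi : ℕ × ℕ → ℝ} (r : Run p q lo hi) :
    ∀ t, t ≤ r.N → ∀ s ≤ t, ∀ x, x ∈ r.H s → x ∉ r.H t →
      ∃ t', s ≤ t' ∧ t' < t ∧ r.pop t' = x := by
  intro t
  induction t with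
  | zero =>
    intro _ s hs x hxs hxt
    interval_cases s
    exact absurd hxs hxt
  | succ t ih =>
    intro ht s hs x hxs hxt
    have htN : t < r.N := ht
    by_cases hse : s = t + 1
    · subst hse; exact absurd hxs hxt
    · have hs' : s ≤ t := by omega
      by_cases hxt' : x ∈ r.H t
      · by_cases hpe : r.pop t = x
        · exact ⟨t, hs', Nat.lt_succ_self t, hpe⟩
        · exfalso
          apply hxt
          rw [r.step t htN]
          exact Finset.mem_union_left _ (Finset.mem_erase.2 ⟨fun h => hpe h.symm, hxt'⟩)
      · obtain ⟨t', h1, h2, h3⟩ := ih htN.le s hs' x hxs hxt'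
        exact ⟨t', h1, h2.trans (Nat.lt_succ_self t), h3⟩

lemma count_inv {p q : ℕ} {lo hi : ℕ × ℕ → ℝ} (r : Run p q lo hi) :
    ∀ t ≤ r.N, ((r.H t).filter (fun x : Tup => x.2.2 = false ∧ x.2.1.2 = 1)).card ≤ 1 := by
  intro t
  induction t with
  | zero =>
    intro _
    calc ((r.H 0).filter _).card ≤ (r.H 0).card := Finset.card_filter_le _ _
    _ = 1 := by rw [r.init]; simp
  | succ t ih =>
    intro ht
    have htN : t < r.N := ht
    have hwfp := wf_all r t htN.le _ (r.mem t htN)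
    rw [r.step t htN, Finset.filter_union]
    refine le_trans (Finset.card_union_le _ _) ?_
    by_cases hP : (r.pop t).2.2 = false ∧ (r.pop t).2.1.2 = 1
    · -- pop is a v=1 floor
      have hmemf : r.pop t ∈ (r.H t).filter (fun x : Tup => x.2.2 = false ∧ x.2.1.2 = 1) :=
        Finset.mem_filter.2 ⟨r.mem t htN, hP⟩
      have h2 : (((r.H t).erase (r.pop t)).filter
          (fun x : Tup => x.2.2 = false ∧ x.2.1.2 = 1)).card = 0 := by
        rw [Finset.filter_erase, Finset.card_erase_of_mem hmemf]
        have := ih htN.le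
        omega
      have h3 : ((succs p q lo hi (r.pop t) \ ((Finset.range (t+1)).image r.pop)).filter
          (fun x : Tup => x.2.2 = false ∧ x.2.1.2 = 1)).card ≤ 1 := by
        refine le_trans (Finset.card_le_card (fun x hx => ?_))
          (Finset.card_singleton (floorT lo ((r.pop t).2.1.1 + 1, 1)) ▸ le_refl 1)
        obtain ⟨hx1, hx2⟩ := Finset.mem_filter.1 hx
        have hx3 := (Finset.mem_sdiff.1 hx1).1
        rcases mem_succs.1 hx3 with ⟨hf, h1 | ⟨_, h1⟩ | ⟨_, h1⟩⟩
        · exfalso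
          rw [h1] at hx2
          simp [ceilT] at hx2
        · rw [Finset.mem_singleton, h1, hP.2]
        · exfalso
          rw [h1] at hx2
          simp only [floorT] at hx2
          have hv := hx2.2
          omega
      calc _ ≤ 0 + 1 := by omega
      _ = 1 := by omega
    · -- pop is not a v=1 floor: new part contributes nothing
      have h3 : ((succs p q lo hi (r.pop t) \ ((Finset.range (t+1)).image r.pop)).filter
          (fun x : Tup => x.2.2 = false ∧ x.2.1.2 = 1)).card = 0 := by
        rw [Finset.card_eq_zero, Finset.filter_eq_empty_iff]
        intro x hx1 hpx
        obtain ⟨hxf, hxv⟩ := hpx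
        have hx3 := (Finset.mem_sdiff.1 hx1).1
        rcases mem_succs.1 hx3 with ⟨hf, h1 | ⟨_, h1⟩ | ⟨_, h1⟩⟩
        · rw [h1] at hxf
          simp [ceilT] at hxf
        · rw [h1] at hxv
          simp only [floorT] at hxv
          exact hP ⟨hf, hxv⟩
        · rw [h1] at hxv
          simp only [floorT] at hxv
          have := hwfp.2.1
          omega
      have h1 : (((r.H t).erase (r.pop t)).filter
          (fun x : Tup => x.2.2 = false ∧ x.2.1.2 = 1)).card ≤ 1 := by
        refine le_trans (Finset.card_le_card ?_) (ih htN.le)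
        exact Finset.filter_subset_filter _ (Finset.erase_subset _ _)
      omega

lemma origin {p q : ℕ} {lo hi : ℕ × ℕ → ℝ} (r : Run p q lo hi) :
    ∀ t ≤ r.N, ∀ u, 1 < u → floorT lo (u, 1) ∈ r.H t →
      ∃ s < t, r.pop s = floorT lo (u - 1, 1) := by
  intro t
  induction t with
  | zero =>
    intro _ u hu hmem
    rw [r.init] at hmem
    simp only [Finset.mem_singleton, floorT, Prod.ext_iff] at hmem
    omega
  | succ t ih =>
    intro ht u hu hmem
    have htN : t < r.N := ht
    have hwfp := wf_all r t htN.le _ (r.mem t htN)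
    rw [r.step t htN] at hmem
    rcases Finset.mem_union.1 hmem with h | h
    · obtain ⟨s, h1, h2⟩ := ih htN.le u hu (Finset.mem_of_mem_erase h)
      exact ⟨s, h1.trans (Nat.lt_succ_self t), h2⟩
    · have hs := (Finset.mem_sdiff.1 h).1
      rcases mem_succs.1 hs with ⟨hf, h1 | ⟨_, h1⟩ | ⟨_, h1⟩⟩
      · exfalso
        have := congrArg (fun z : Tup => z.2.2) h1
        simp [floorT, ceilT] at this
      · -- pop t = floorT lo (u-1, 1)
        have ha : u = (r.pop t).2.1.1 + 1 := by
          have := congrArg (fun z : Tup => z.2.1.1) h1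
          simpa [floorT] using this
        have hb : (1 : ℕ) = (r.pop t).2.1.2 := by
          have := congrArg (fun z : Tup => z.2.1.2) h1
          simpa [floorT] using this
        refine ⟨t, Nat.lt_succ_self t, ?_⟩
        rcases hwfp.2.2 with ⟨hflag, _⟩ | ⟨_, heq⟩
        · rw [hf] at hflag; exact absurd hflag (by simp)
        · rw [heq]
          have hidx : (r.pop t).2.1 = (u - 1, 1) := by
            have : (r.pop t).2.1 = ((r.pop t).2.1.1, (r.pop t).2.1.2) := rfl
            rw [this, ← hb]
            congr 1
            omega
          rw [hidx]
      · exfalso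
        have hb : (1 : ℕ) = (r.pop t).2.1.2 + 1 := by
          have := congrArg (fun z : Tup => z.2.1.2) h1
          simpa [floorT] using this
        have := hwfp.2.1
        omega


/-- Along the first row (v = 1, with |Y^(1)| = 1): (a) the heap
never contains more than one tuple of the form ⌊(u,1)⌋ at any time, and (b)
popping ⌊(u,1)⌋ with u > 1 requires having previously popped ⌈(u−1,1)⌉. -/
theorem first_row_tuples (p q : ℕ) (hp : 1 ≤ p) (hq : 1 ≤ q)
    (X Y : ℕ → Finset ℝ)
    (hXne : ∀ u, (X u).Nonempty) (hYne : ∀ v, (Y v).Nonempty)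
    (hXord : ∀ u v, u < v → ∀ a ∈ X u, ∀ b ∈ X v, a ≤ b)
    (hYord : ∀ u v, u < v → ∀ a ∈ Y u, ∀ b ∈ Y v, a ≤ b)
    (lo hi : ℕ × ℕ → ℝ)
    (hlo : ∀ uv : ℕ × ℕ, lo uv = (X uv.1).min' (hXne uv.1) + (Y uv.2).min' (hYne uv.2))
    (hhi : ∀ uv : ℕ × ℕ, hi uv = (X uv.1).max' (hXne uv.1) + (Y uv.2).max' (hYne uv.2))
    (hY1 : (Y 1).card = 1)
    (r : Run p q lo hi) :
    (∀ t ≤ r.N,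
      ((r.H t).filter (fun x : Tup => x.2.2 = false ∧ x.2.1.2 = 1)).card ≤ 1) ∧
    (∀ t < r.N, ∀ u : ℕ, 1 < u → r.pop t = floorT lo (u, 1) →
      ∃ t' < t, r.pop t' = ceilT hi (u - 1, 1)) := by
  constructor
  · exact count_inv r
  · intro t ht u hu hpop
    have horder : tupLt (ceilT hi (u - 1, 1)) (floorT lo (u, 1)) := by
      obtain ⟨a, hY⟩ := Finset.card_eq_one.1 hY1
      have hmaxX : (X (u-1)).max' (hXne _) ≤ (X u).min' (hXne u) :=
        hXord (u-1) u (by omega) _ ((X (u-1)).max'_mem _) _ ((X u).min'_mem _)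
      have hYeq : (Y 1).max' (hYne 1) = (Y 1).min' (hYne 1) := by simp [hY]
      have hle : hi (u-1, 1) ≤ lo (u, 1) := by
        rw [hhi (u-1,1), hlo (u,1)]
        exact add_le_add hmaxX (le_of_eq hYeq)
      unfold tupLt idxLt ceilT floorT
      simp only
      rcases lt_or_eq_of_le hle with h | h
      · exact Or.inl h
      · exact Or.inr ⟨h, Or.inl (Or.inl (by omega))⟩
    have hmemt : floorT lo (u,1) ∈ r.H t := by rw [← hpop]; exact r.mem t ht
    obtain ⟨s, hst, hps⟩ := origin r t ht.le u hu hmemt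
    have hsN : s < r.N := lt_trans hst ht
    by_cases hcpop : ceilT hi (u-1,1) ∈ (Finset.range (s+1)).image r.pop
    · obtain ⟨t', ht', hpt'⟩ := Finset.mem_image.1 hcpop
      exact ⟨t', by have := Finset.mem_range.1 ht'; omega, hpt'⟩
    · have hcH : ceilT hi (u-1,1) ∈ r.H (s+1) := by
        rw [r.step s hsN]
        refine Finset.mem_union_right _ (Finset.mem_sdiff.2 ⟨?_, hcpop⟩)
        refine mem_succs.2 ?_
        rw [hps]
        exact ⟨rfl, Or.inl rfl⟩
      have hcnot : ceilT hi (u-1,1) ∉ r.H t := by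
        intro hc
        have := r.isMin t ht _ hc
        rw [hpop] at this
        exact this horder
      obtain ⟨t', h1, h2, h3⟩ := persist r t ht.le (s+1) (by omega) _ hcH hcnot
      exact ⟨t', h2, h3⟩
end

section
/- In a soft heap process with corruption parameter ε ≤ 1/4 where each pop inserts at most 4 new elements, performing p = ⌈k/(1−4ε)⌉ pops guarantees that the popped elements include the k smallest elements ever inserted, since the number of corrupted elements is at most ε times the number of insertions, which is at most 4p. -/
/-! At least `p - ε·4p ≥ k` popped elements are uncorrupted, and these lie below every element
never popped. Hence the popped elements lying below everything unpopped form an initial segment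
of `I` in sorted order, of length at least `k`, and it contains the `k` smallest elements. -/

namespace Multiset

variable {α : Type*} [LinearOrder α]

theorem sort_eq_sort_append_sort_sub {Q I : Multiset α} (hQI : Q ≤ I)
    (hQ : ∀ x ∈ Q, ∀ y ∈ I - Q, x ≤ y) :
    sort I (· ≤ ·) = sort Q (· ≤ ·) ++ sort (I - Q) (· ≤ ·) := by
  refine List.Perm.eq_of_pairwise' (pairwise_sort _ _) ?_ ?_
  · refine List.pairwise_append.mpr ⟨pairwise_sort _ _, pairwise_sort _ _, fun x hx y hy => ?_⟩
    exact hQ x ((mem_sort _).mp hx) y ((mem_sort _).mp hy)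
  · rw [← coe_eq_coe, ← coe_add, sort_eq, sort_eq, sort_eq, add_tsub_cancel_of_le hQI]

theorem coe_take_sort_le_of_forall_le {Q I : Multiset α} {k : ℕ} (hQI : Q ≤ I)
    (hQ : ∀ x ∈ Q, ∀ y ∈ I - Q, x ≤ y) (hk : k ≤ card Q) :
    (↑((sort I (· ≤ ·)).take k) : Multiset α) ≤ Q := by
  rw [sort_eq_sort_append_sort_sub hQI hQ,
    List.take_append_of_le_length (by rwa [length_sort])]
  simpa only [sort_eq] using coe_le.mpr (List.take_sublist k (sort Q (· ≤ ·))).subperm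

theorem coe_take_sort_le_of_forall_le_sub {G P I : Multiset α} {k : ℕ} (hGP : G ≤ P)
    (hPI : P ≤ I) (hG : ∀ x ∈ G, ∀ y ∈ I - P, x ≤ y) (hk : k ≤ card G) :
    (↑((sort I (· ≤ ·)).take k) : Multiset α) ≤ P := by
  set Q := P.filter fun x => ∀ y ∈ I - P, x ≤ y
  have hGQ : G ≤ Q := le_filter.mpr ⟨hGP, hG⟩
  have hIQ : I - Q = (I - P) + P.filter fun x => ¬ ∀ y ∈ I - P, x ≤ y := by
    rw [← tsub_add_tsub_cancel hPI (filter_le _ P), sub_filter_eq_filter_not]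
  have hQ : ∀ x ∈ Q, ∀ y ∈ I - Q, x ≤ y := by
    intro x hx y hy
    have hxP := (mem_filter.mp hx).2
    rw [hIQ, mem_add] at hy
    rcases hy with hy | hy
    · exact hxP y hy
    · obtain ⟨z, hz, hzy⟩ := not_forall₂.mp (mem_filter.mp hy).2
      exact (hxP z hz).trans (not_le.mp hzy).le
  exact (coe_take_sort_le_of_forall_le (filter_le _ _ |>.trans hPI) hQ
    (hk.trans (card_le_card hGQ))).trans (filter_le _ _)

end Multiset

theorem soft_heap_pop_count_general (ε : ℝ) (hε0 : 0 ≤ ε) (hε : ε < 1 / 4)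
    (k : ℕ) (p : ℕ) (hp : p = ⌈(k : ℝ) / (1 - 4 * ε)⌉₊)
    (I P C : Multiset ℝ) (hPI : P ≤ I) (hCP : C ≤ P)
    (hI : Multiset.card I ≤ 4 * p) (hcardP : Multiset.card P = p)
    (hC : (Multiset.card C : ℝ) ≤ ε * Multiset.card I)
    (hgood : ∀ x ∈ P - C, ∀ y ∈ I - P, x ≤ y) :
    (k : ℝ) ≤ (p : ℝ) - 4 * p * ε ∧
    (↑((Multiset.sort I (· ≤ ·)).take k) : Multiset ℝ) ≤ P := by
  have hpk : (k : ℝ) ≤ p * (1 - 4 * ε) := by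
    rw [← div_le_iff₀ (by linarith), hp]
    exact Nat.le_ceil _
  have hCI : (Multiset.card C : ℝ) ≤ 4 * p * ε := by
    have hI' : (Multiset.card I : ℝ) ≤ 4 * p := by exact_mod_cast hI
    nlinarith
  have hCp : Multiset.card C ≤ p := hcardP ▸ Multiset.card_le_card hCP
  have hk : k ≤ Multiset.card (P - C) := by
    rw [Multiset.card_sub hCP, hcardP, ← Nat.cast_le (α := ℝ), Nat.cast_sub hCp]
    linarith
  exact ⟨by linarith, Multiset.coe_take_sort_le_of_forall_le_sub tsub_le_self hPI hgood hk⟩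

/-- In a soft-heap process with corruption parameter ε (ε ≤ 1/4,
here ε < 1/4 so that p is finite) where each pop triggers at most 4 insertions,
performing p = ⌈k/(1−4ε)⌉ pops guarantees k ≤ p − 4pε uncorrupted pops, and the
popped multiset P contains the k smallest of the inserted elements I.  Here
C ⊆ P is the corrupted portion, with card C ≤ ε·(card I), card I ≤ 4p, and
every uncorrupted popped element is ≤ every element never popped. -/
theorem soft_heap_pop_count (ε : ℝ) (hε0 : 0 ≤ ε) (hε : ε < 1 / 4)
    (k : ℕ) (hk : 1 ≤ k) (p : ℕ) (hp : p = ⌈(k : ℝ) / (1 - 4 * ε)⌉₊)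
    (I P C : Multiset ℝ) (hPI : P ≤ I) (hCP : C ≤ P)
    (hI : Multiset.card I ≤ 4 * p) (hcardP : Multiset.card P = p)
    (hC : (Multiset.card C : ℝ) ≤ ε * Multiset.card I)
    (hgood : ∀ x ∈ P - C, ∀ y ∈ I - P, x ≤ y) :
    (k : ℝ) ≤ (p : ℝ) - 4 * p * ε ∧
    (↑((Multiset.sort I (· ≤ ·)).take k) : Multiset ℝ) ≤ P :=
  soft_heap_pop_count_general ε hε0 hε k p hp I P C hPI hCP hI hcardP hC hgood
end

section
/- Iteratively applying linear-time k-selection to remove the largest remaining layer constructs a layer-ordered heap of rank α > 1 on n elements in O(n) total time: the total work is bounded by c·Σ_u (remaining size before extracting layer u) = c·Σ_u Σ_{w≤u} |X^(w)| ∈ O(n) when layer sizes grow geometrically with ratio α. -/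
open Finset

section GeomSum

variable {K : Type*} [Field K] [LinearOrder K] [IsStrictOrderedRing K]

theorem geom_sum_le_div_sub_one_mul_pow {x : K} (hx : 1 < x) (n : ℕ) :
    ∑ i ∈ range (n + 1), x ^ i ≤ x / (x - 1) * x ^ n := by
  have hx1 : 0 < x - 1 := sub_pos.mpr hx
  rw [div_mul_eq_mul_div, le_div_iff₀ hx1, geom_sum_mul, ← pow_succ']
  exact sub_le_self _ zero_le_one

theorem sum_range_geom_sum_le {x : K} (hx : 1 < x) (m : ℕ) :
    ∑ u ∈ range m, ∑ i ∈ range (u + 1), x ^ i ≤ x / (x - 1) * ∑ u ∈ range m, x ^ u := by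
  rw [mul_sum]
  exact sum_le_sum fun u _ => geom_sum_le_div_sub_one_mul_pow hx u

end GeomSum

/-- LOHification by iterated linear-time selection runs in O(n)
time: with geometric layer sizes |X^(w)| = α^(w-1) (w = 1..m) and linear-time
selection costing c·m on m elements, the total work
c·Σ_u Σ_{w ≤ u} |X^(w)| is at most a constant C (depending only on α) times
c·n, where n = Σ_w |X^(w)| is the total number of elements. -/
theorem lohify_linear_time (α : ℝ) (hα : 1 < α) :
    ∃ C : ℝ, 0 < C ∧ ∀ c : ℝ, 0 ≤ c → ∀ m : ℕ,
      c * ∑ u ∈ Finset.range m, (∑ w ∈ Finset.range (u + 1), α ^ w) ≤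
        C * (c * ∑ w ∈ Finset.range m, α ^ w) := by
  refine ⟨α / (α - 1), div_pos (by linarith) (sub_pos.mpr hα), fun c hc m => ?_⟩
  rw [mul_left_comm]
  exact mul_le_mul_of_nonneg_left (sum_range_geom_sum_le hα m) hc
end
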